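/- Fix positive reals ν_a, ν_o, h_a, h_o, α_c, ε and θ ∈ ℝ, and fix t ∈ ℝ, t ≠ 0; for j ∈ {a,o} set χ_j = i·t·h_j²/ν_j and λ_j = (χ_j − √(χ_j)·√(χ_j+4))/2 (principal complex square root). Suppose the complex numbers B_k, B_{k−1}, A_{k−1} satisfy the flux condition A_{k−1} = ε·(ν_a/ν_o)·B_{k−1} and the Fourier-transformed transmission condition (χ_a·ν_a/h_a + θ·α_c)·B_k − θ·α_c·(λ_a+1)·B_k = (1−θ)·α_c·((λ_a+1)·B_{k−1} − B_{k−1}) − α_c·(h_a·ν_o/(h_o·ν_a))·(A_{k−1} − (λ_o+1)·A_{k−1}). Then B_k·(ν_a·χ_a/(α_c·h_a·λ_a) − θ) = B_{k−1}·((1−θ) + ε·h_a·λ_o/(h_o·λ_a)); in particular, if B_{k−1} ≠ 0 and ν_a·χ_a/(α_c·h_a·λ_a) − θ ≠ 0, then |B_k/B_{k−1}| = |((1−θ) + ε·h_a·λ_o/(h_o·λ_a)) / (ν_a·χ_a/(α_c·h_a·λ_a) − θ)|. -/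

import Mathlib

/-- Principal complex square root. -/
noncomputable def csqrt (z : ℂ) : ℂ := z ^ ((1 : ℂ) / 2)

/-- `λ(χ) = (χ − √χ·√(χ+4))/2`. -/
noncomputable def lamM (χ : ℂ) : ℂ := (χ - csqrt χ * csqrt (χ + 4)) / 2

lemma csqrt_sq (z : ℂ) : csqrt z ^ 2 = z := by
  unfold csqrt
  rcases eq_or_ne z 0 with rfl | hz
  · simp [Complex.zero_cpow]
  · rw [pow_two, ← Complex.cpow_add _ _ hz]
    norm_num

/-- Combining the flux condition and the Fourier-transformed transmission condition of
the SWR algorithm with linear friction yields the one-step relation between `B_k` and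
`B_{k−1}`, hence the convergence factor
`|B_k/B_{k−1}| = |((1−θ) + ε·h_a·λ_o/(h_o·λ_a)) / (ν_a·χ_a/(α_c·h_a·λ_a) − θ)|`. -/
theorem convergence_factor_derivation
    (νa νo ha ho αc ε : ℝ) (θ : ℝ)
    (hνa : 0 < νa) (hνo : 0 < νo) (hha : 0 < ha) (hho : 0 < ho)
    (hαc : 0 < αc) (hε : 0 < ε)
    (t : ℝ) (ht : t ≠ 0)
    (χa χo la lo : ℂ)
    (hχa : χa = Complex.I * t * (ha : ℂ) ^ 2 / (νa : ℂ))
    (hχo : χo = Complex.I * t * (ho : ℂ) ^ 2 / (νo : ℂ))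
    (hla : la = lamM χa) (hlo : lo = lamM χo)
    (Bk Bkm1 Akm1 : ℂ)
    (hflux : Akm1 = (ε : ℂ) * ((νa : ℂ) / (νo : ℂ)) * Bkm1)
    (htrans : (χa * (νa : ℂ) / (ha : ℂ) + (θ : ℂ) * (αc : ℂ)) * Bk
        - (θ : ℂ) * (αc : ℂ) * (la + 1) * Bk
      = (1 - (θ : ℂ)) * (αc : ℂ) * ((la + 1) * Bkm1 - Bkm1)
        - (αc : ℂ) * ((ha : ℂ) * (νo : ℂ) / ((ho : ℂ) * (νa : ℂ)))
          * (Akm1 - (lo + 1) * Akm1)) :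
    Bk * ((νa : ℂ) * χa / ((αc : ℂ) * (ha : ℂ) * la) - (θ : ℂ))
      = Bkm1 * ((1 - (θ : ℂ)) + (ε : ℂ) * (ha : ℂ) * lo / ((ho : ℂ) * la)) ∧
    (Bkm1 ≠ 0 → (νa : ℂ) * χa / ((αc : ℂ) * (ha : ℂ) * la) - (θ : ℂ) ≠ 0 →
      ‖Bk / Bkm1‖
        = ‖(((1 - (θ : ℂ)) + (ε : ℂ) * (ha : ℂ) * lo / ((ho : ℂ) * la))
            / ((νa : ℂ) * χa / ((αc : ℂ) * (ha : ℂ) * la) - (θ : ℂ)))‖) := by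
  have hνa' : (νa : ℂ) ≠ 0 := by exact_mod_cast hνa.ne'
  have hνo' : (νo : ℂ) ≠ 0 := by exact_mod_cast hνo.ne'
  have hha' : (ha : ℂ) ≠ 0 := by exact_mod_cast hha.ne'
  have hho' : (ho : ℂ) ≠ 0 := by exact_mod_cast hho.ne'
  have hαc' : (αc : ℂ) ≠ 0 := by exact_mod_cast hαc.ne'
  have ht' : (t : ℂ) ≠ 0 := by exact_mod_cast ht
  have hχa0 : χa ≠ 0 := by
    rw [hχa]
    exact div_ne_zero (mul_ne_zero (mul_ne_zero Complex.I_ne_zero ht') (pow_ne_zero _ hha')) hνa'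
  have hla0 : la ≠ 0 := by
    intro h
    have h2 : χa = csqrt χa * csqrt (χa + 4) := by
      have h1 := hla.symm.trans h
      unfold lamM at h1
      field_simp at h1
      linear_combination h1
    have hsq : χa ^ 2 = χa * (χa + 4) := by
      calc χa ^ 2 = (csqrt χa * csqrt (χa + 4)) ^ 2 := by rw [← h2]
        _ = csqrt χa ^ 2 * csqrt (χa + 4) ^ 2 := by ring
        _ = χa * (χa + 4) := by rw [csqrt_sq, csqrt_sq]
    exact hχa0 (by linear_combination -(1/4 : ℂ) * hsq)
  have main : Bk * ((νa : ℂ) * χa / ((αc : ℂ) * (ha : ℂ) * la) - (θ : ℂ))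
      = Bkm1 * ((1 - (θ : ℂ)) + (ε : ℂ) * (ha : ℂ) * lo / ((ho : ℂ) * la)) := by
    rw [hflux] at htrans
    field_simp at htrans
    have hD : ((αc : ℂ) * ha * la * ho * νa * νo) ≠ 0 := by
      simp [hαc', hha', hla0, hho', hνa', hνo']
    apply mul_right_cancel₀ hD
    field_simp
    linear_combination htrans
  refine ⟨main, fun hB hD => ?_⟩
  have key : Bk / Bkm1 = ((1 - (θ : ℂ)) + (ε : ℂ) * (ha : ℂ) * lo / ((ho : ℂ) * la))
      / ((νa : ℂ) * χa / ((αc : ℂ) * (ha : ℂ) * la) - (θ : ℂ)) := by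
    rw [div_eq_div_iff hB hD]
    linear_combination main
  rw [key]
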